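/- arXiv:2512.14705 — 2 statements merged into one kernel-verified Lean document; each statement's English description precedes it below -/
import Mathlib

section
/- Let n be a positive integer, let w be symmetric nonnegative weights on {1,…,n}, let p ≥ 2, and let Δ_p be the associated graph p-Laplacian. Then the operator I + Δ_p is a bijection, i.e., Δ_p is maximal monotone on ℝⁿ: for every b ∈ ℝⁿ there exists a unique u ∈ ℝⁿ such that u + Δ_p u = b. -/
open Real Finset
open scoped RealInnerProductSpace

/-- The graph `p`-Laplacian on a weighted graph with `n` nodes:
`(Δ_p u)_i = Σ_j w i j * |u_i - u_j|^(p-2) (u_i - u_j)`, where the real power is `rpow`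
(so that `|x|^(p-2) x = 0` when `x = 0`, for any `p`). -/
noncomputable def graphPLap {n : ℕ} (w : Fin n → Fin n → ℝ) (p : ℝ)
    (u : EuclideanSpace ℝ (Fin n)) : EuclideanSpace ℝ (Fin n) :=
  WithLp.toLp 2 (fun i => ∑ j, w i j * (|u i - u j| ^ (p - 2) * (u i - u j)))

/-!
`Δ_p` is the gradient of the nonnegative energy `E u = (2p)⁻¹ ∑ᵢ ∑ⱼ wᵢⱼ |uᵢ - uⱼ|^p`, so a
minimiser of the coercive function `½‖u - b‖² + E u` solves `u + Δ_p u = b`. Uniqueness comes from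
monotonicity, `⟪Δ_p u - Δ_p v, u - v⟫ ≥ 0`: by symmetry of `w` this inner product is half a sum
over edges of `wᵢⱼ (φ(uᵢ - uⱼ) - φ(vᵢ - vⱼ)) ((uᵢ - uⱼ) - (vᵢ - vⱼ))` with `φ t = |t|^(p-2) t`
monotone.
-/

open Filter

section MonotoneOperator

variable {E : Type*} [NormedAddCommGroup E] [InnerProductSpace ℝ E] {A : E → E}

theorem injective_self_add_of_monotone (hA : ∀ u v, 0 ≤ ⟪A u - A v, u - v⟫) :
    Function.Injective fun u => u + A u := by
  intro u v huv
  have h : ⟪u - v, u - v⟫ + ⟪A u - A v, u - v⟫ = 0 := by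
    rw [← inner_add_left, show u - v + (A u - A v) = (u + A u) - (v + A v) by abel]
    simp only at huv
    rw [huv, sub_self, inner_zero_left]
  rw [← sub_eq_zero, ← inner_self_eq_zero (𝕜 := ℝ)]
  exact le_antisymm (by linarith [hA u v]) real_inner_self_nonneg

theorem surjective_self_add_of_hasGradientAt [ProperSpace E] {Φ : E → ℝ} {m : ℝ}
    (hΦ : ∀ u, HasGradientAt Φ (A u) u) (hm : ∀ u, m ≤ Φ u) :
    Function.Surjective fun u => u + A u := by
  intro b
  set F : E → ℝ := fun u => 2⁻¹ * ‖u - b‖ ^ 2 + Φ u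
  have hF : ∀ u, HasFDerivAt F (innerSL ℝ (u - b + A u)) u := by
    intro u
    refine ((((hasFDerivAt_id u).sub_const b).norm_sq.const_mul 2⁻¹).add
      (hasGradientAt_iff_hasFDerivAt.mp (hΦ u))).congr_fderiv ?_
    ext v
    simp
  have hcoercive : Tendsto F (cocompact E) atTop := by
    have hdist : Tendsto (fun u => ‖u - b‖) (cocompact E) atTop :=
      tendsto_norm_cocompact_atTop.comp (Homeomorph.subRight b).isClosedEmbedding.tendsto_cocompact
    refine tendsto_atTop_mono (fun u => add_le_add_right (hm u) _) ?_
    exact tendsto_atTop_add_const_right _ m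
      (((tendsto_pow_atTop two_ne_zero).comp hdist).const_mul_atTop (by norm_num))
  have hcont : Continuous F := continuous_iff_continuousAt.mpr fun u => (hF u).continuousAt
  obtain ⟨u, hu⟩ := hcont.exists_forall_le hcoercive
  have hcrit := IsLocalMin.hasFDerivAt_eq_zero (Eventually.of_forall hu) (hF u)
  rw [← map_zero (innerSL ℝ), innerSL_inj, sub_add_eq_add_sub, sub_eq_zero] at hcrit
  exact ⟨u, hcrit⟩

end MonotoneOperator

theorem sum_sum_mul_sub_of_antisymm {ι R : Type*} [Fintype ι] [CommRing R] {g : ι → ι → R}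
    (hg : ∀ i j, g j i = -g i j) (v : ι → R) :
    ∑ i, ∑ j, g i j * (v i - v j) = 2 * ∑ i, (∑ j, g i j) * v i := by
  have hswap : ∑ i, ∑ j, g i j * v j = -∑ i, ∑ j, g i j * v i := by
    rw [Finset.sum_comm, ← Finset.sum_neg_distrib]
    refine Finset.sum_congr rfl fun i _ => ?_
    rw [← Finset.sum_neg_distrib]
    exact Finset.sum_congr rfl fun j _ => by rw [hg, neg_mul]
  simp only [mul_sub, Finset.sum_sub_distrib, hswap, Finset.sum_mul]
  ring

theorem monotone_abs_rpow_mul_self {q : ℝ} (hq : 0 ≤ q) : Monotone fun x : ℝ => |x| ^ q * x := by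
  have hnonneg : ∀ ⦃x y : ℝ⦄, 0 ≤ x → x ≤ y → |x| ^ q * x ≤ |y| ^ q * y := by
    intro x y hx hxy
    rw [abs_of_nonneg hx, abs_of_nonneg (hx.trans hxy)]
    exact mul_le_mul (rpow_le_rpow hx hxy hq) hxy hx (rpow_nonneg (hx.trans hxy) _)
  intro x y hxy
  rcases le_total 0 x with hx | hx
  · exact hnonneg hx hxy
  rcases le_total y 0 with hy | hy
  · simpa [abs_neg] using hnonneg (neg_nonneg.mpr hy) (neg_le_neg hxy)
  · exact (mul_nonpos_of_nonneg_of_nonpos (rpow_nonneg (abs_nonneg x) _) hx).trans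
      (mul_nonneg (rpow_nonneg (abs_nonneg y) _) hy)

section GraphPLaplacian

variable {n : ℕ} {w : Fin n → Fin n → ℝ} {p : ℝ}

theorem inner_graphPLap (hsym : ∀ i j, w i j = w j i) (u v : EuclideanSpace ℝ (Fin n)) :
    ⟪graphPLap w p u, v⟫ =
      2⁻¹ * ∑ i, ∑ j, w i j * (|u i - u j| ^ (p - 2) * (u i - u j)) * (v i - v j) := by
  rw [sum_sum_mul_sub_of_antisymm (fun i j => by rw [hsym, ← neg_sub, abs_neg]; ring)]
  simp [graphPLap, PiLp.inner_apply, mul_comm]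

theorem inner_graphPLap_sub_graphPLap_nonneg (hsym : ∀ i j, w i j = w j i)
    (hw : ∀ i j, 0 ≤ w i j) (hp : 2 ≤ p) (u v : EuclideanSpace ℝ (Fin n)) :
    0 ≤ ⟪graphPLap w p u - graphPLap w p v, u - v⟫ := by
  have hφ := (monotone_abs_rpow_mul_self (q := p - 2) (by linarith)).monovary monotone_id
  rw [inner_sub_left, inner_graphPLap hsym, inner_graphPLap hsym, ← mul_sub,
    ← Finset.sum_sub_distrib]
  refine mul_nonneg (by norm_num) (Finset.sum_nonneg fun i _ => ?_)
  rw [← Finset.sum_sub_distrib]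
  refine Finset.sum_nonneg fun j _ => ?_
  have := mul_nonneg (hw i j) (hφ.sub_mul_sub_nonneg (u i - u j) (v i - v j))
  simp only [PiLp.sub_apply, id] at this ⊢
  linear_combination this

noncomputable def graphPEnergy (w : Fin n → Fin n → ℝ) (p : ℝ) (u : EuclideanSpace ℝ (Fin n)) :
    ℝ :=
  (2 * p)⁻¹ * ∑ i, ∑ j, w i j * |u i - u j| ^ p

theorem graphPEnergy_nonneg (hw : ∀ i j, 0 ≤ w i j) (hp : 0 ≤ p) (u : EuclideanSpace ℝ (Fin n)) :
    0 ≤ graphPEnergy w p u :=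
  mul_nonneg (by positivity) <| Finset.sum_nonneg fun i _ => Finset.sum_nonneg fun j _ =>
    mul_nonneg (hw i j) (rpow_nonneg (abs_nonneg _) _)

theorem hasFDerivAt_abs_sub_rpow (hp : 1 < p) (i j : Fin n) (u : EuclideanSpace ℝ (Fin n)) :
    HasFDerivAt (fun v : EuclideanSpace ℝ (Fin n) => |v i - v j| ^ p)
      ((p * |u i - u j| ^ (p - 2) * (u i - u j)) •
        (EuclideanSpace.proj (𝕜 := ℝ) i - EuclideanSpace.proj j)) u :=
  (hasDerivAt_abs_rpow _ hp).comp_hasFDerivAt u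
    (EuclideanSpace.proj (𝕜 := ℝ) i - EuclideanSpace.proj j).hasFDerivAt

theorem hasGradientAt_graphPEnergy (hsym : ∀ i j, w i j = w j i) (hp : 1 < p)
    (u : EuclideanSpace ℝ (Fin n)) : HasGradientAt (graphPEnergy w p) (graphPLap w p u) u := by
  rw [hasGradientAt_iff_hasFDerivAt]
  refine (HasFDerivAt.const_mul (HasFDerivAt.fun_sum fun i _ => HasFDerivAt.fun_sum fun j _ =>
    (hasFDerivAt_abs_sub_rpow hp i j u).const_mul (w i j)) (2 * p)⁻¹).congr_fderiv ?_
  ext v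
  simp only [mul_inv_rev, smul_apply, _root_.sum_apply, sub_apply, PiLp.proj_apply, smul_eq_mul,
    InnerProductSpace.toDual_apply_apply, inner_graphPLap hsym]
  simp only [Finset.mul_sum]
  refine Finset.sum_congr rfl fun i _ => Finset.sum_congr rfl fun j _ => ?_
  field_simp

end GraphPLaplacian

theorem graphPLap_maximalMonotone_general {n : ℕ} (w : Fin n → Fin n → ℝ)
    (hsym : ∀ i j, w i j = w j i) (hw : ∀ i j, 0 ≤ w i j) (p : ℝ) (hp : 2 ≤ p) :
    ∀ b : EuclideanSpace ℝ (Fin n), ∃! u : EuclideanSpace ℝ (Fin n),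
      u + graphPLap w p u = b := by
  have hbij : Function.Bijective fun u => u + graphPLap w p u :=
    ⟨injective_self_add_of_monotone (inner_graphPLap_sub_graphPLap_nonneg hsym hw hp),
      surjective_self_add_of_hasGradientAt (hasGradientAt_graphPEnergy hsym (by linarith))
        (graphPEnergy_nonneg hw (by linarith))⟩
  exact hbij.existsUnique

/-- Maximal monotonicity: I + Δ_p is a bijection on ℝⁿ. -/
theorem graphPLap_maximalMonotone {n : ℕ} (hn : 0 < n) (w : Fin n → Fin n → ℝ)
    (hsym : ∀ i j, w i j = w j i) (hw : ∀ i j, 0 ≤ w i j) (p : ℝ) (hp : 2 ≤ p) :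
    ∀ b : EuclideanSpace ℝ (Fin n), ∃! u : EuclideanSpace ℝ (Fin n),
      u + graphPLap w p u = b :=
  graphPLap_maximalMonotone_general w hsym hw p hp
end

section
/- Let n be a positive integer, let w be symmetric nonnegative weights on {1,…,n}, let p ≥ 2, and let Δ_p be the associated graph p-Laplacian. Let F : ℝⁿ → ℝⁿ and C_F ∈ ℝ satisfy the one-sided Lipschitz (monotonicity) condition ⟨F(a) − F(b), a − b⟩ ≤ C_F ‖a − b‖² for all a, b ∈ ℝⁿ. If u, v : ℝ → ℝⁿ are differentiable and both satisfy x′(t) = −Δ_p x(t) + F(x(t)) for all t ≥ 0, then solutions depend continuously on initial data: ‖u(t) − v(t)‖ ≤ e^{C_F t} ‖u(0) − v(0)‖ for all t ≥ 0. -/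
/-!
The difference `D = u - v` satisfies `⟪D', D⟫ ≤ C_F ‖D‖²`: the reaction term contributes at most
`C_F ‖D‖²`, while the graph `p`-Laplacian is a monotone operator. Indeed, summing by parts with the
symmetric weights gives `2⟪Δ_p a - Δ_p b, a - b⟫ = Σ_{i,j} w i j (φ_p(a_i - a_j) - φ_p(b_i - b_j))
((a_i - a_j) - (b_i - b_j))`, and each term is nonnegative because `φ_p(t) = |t|^{p-2} t` is
nondecreasing. Gronwall's inequality applied to `‖D‖²` then gives the exponential bound.
-/

open Real Finset
open scoped RealInnerProductSpace

noncomputable def phiP (p t : ℝ) : ℝ := |t| ^ (p - 2) * t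

lemma phiP_neg (p t : ℝ) : phiP p (-t) = -phiP p t := by
  simp [phiP]

lemma phiP_of_pos {p t : ℝ} (ht : 0 < t) : phiP p t = t ^ (p - 1) := by
  rw [phiP, abs_of_pos ht, ← rpow_add_one ht.ne']
  ring_nf

lemma monotone_phiP {p : ℝ} (hp : 1 ≤ p) : Monotone (phiP p) := by
  refine monotone_of_odd_of_monotoneOn_nonneg (phiP_neg p) fun y (hy : 0 ≤ y) x hx hyx => ?_
  rcases hy.eq_or_lt with rfl | hy
  · simpa [phiP] using mul_nonneg (rpow_nonneg (abs_nonneg x) _) hx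
  · rw [phiP_of_pos hy, phiP_of_pos (hy.trans_le hyx)]
    exact rpow_le_rpow hy.le hyx (by linarith)

lemma phiP_sub_mul_sub_nonneg {p : ℝ} (hp : 1 ≤ p) (x y : ℝ) :
    0 ≤ (phiP p x - phiP p y) * (x - y) :=
  monovary_iff_forall_mul_nonneg.1 ((monotone_phiP hp).monovary monotone_id) y x

section GraphPLaplacian

variable {n : ℕ} {w : Fin n → Fin n → ℝ}

lemma two_mul_inner_graphPLap (hsym : ∀ i j, w i j = w j i) (p : ℝ)
    (a c : EuclideanSpace ℝ (Fin n)) :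
    2 * ⟪graphPLap w p a, c⟫ = ∑ i, ∑ j, w i j * phiP p (a i - a j) * (c i - c j) := by
  have hexpand : ⟪graphPLap w p a, c⟫ = ∑ i, ∑ j, w i j * phiP p (a i - a j) * c i := by
    simp only [PiLp.inner_apply, RCLike.inner_apply, conj_trivial, graphPLap, phiP, mul_sum]
    exact sum_congr rfl fun i _ => sum_congr rfl fun j _ => by ring
  have hswap : ⟪graphPLap w p a, c⟫ = -∑ i, ∑ j, w i j * phiP p (a i - a j) * c j := by
    rw [hexpand, sum_comm]
    simp only [← sum_neg_distrib]
    refine sum_congr rfl fun i _ => sum_congr rfl fun j _ => ?_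
    rw [hsym, ← neg_sub (a i), phiP_neg]
    ring
  rw [two_mul]
  nth_rewrite 1 [hexpand]
  rw [hswap, ← sub_eq_add_neg]
  simp only [← sum_sub_distrib, mul_sub]

lemma inner_graphPLap_sub_nonneg (hsym : ∀ i j, w i j = w j i) (hw : ∀ i j, 0 ≤ w i j)
    {p : ℝ} (hp : 1 ≤ p) (a b : EuclideanSpace ℝ (Fin n)) :
    0 ≤ ⟪graphPLap w p a - graphPLap w p b, a - b⟫ := by
  have h := congr_arg₂ (· - ·) (two_mul_inner_graphPLap hsym p a (a - b))
    (two_mul_inner_graphPLap hsym p b (a - b))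
  simp only [← mul_sub, ← inner_sub_left, ← sum_sub_distrib] at h
  refine nonneg_of_mul_nonneg_right (h ▸ sum_nonneg fun i _ => sum_nonneg fun j _ => ?_) two_pos
  have := mul_nonneg (hw i j) (phiP_sub_mul_sub_nonneg hp (a i - a j) (b i - b j))
  simp only [PiLp.sub_apply]
  linarith

lemma inner_neg_graphPLap_add_sub_le (hsym : ∀ i j, w i j = w j i) (hw : ∀ i j, 0 ≤ w i j)
    {p : ℝ} (hp : 1 ≤ p) {F : EuclideanSpace ℝ (Fin n) → EuclideanSpace ℝ (Fin n)} {C : ℝ}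
    (hF : ∀ a b, ⟪F a - F b, a - b⟫ ≤ C * ‖a - b‖ ^ 2) (a b : EuclideanSpace ℝ (Fin n)) :
    ⟪(-graphPLap w p a + F a) - (-graphPLap w p b + F b), a - b⟫ ≤ C * ‖a - b‖ ^ 2 := by
  have hsplit : -graphPLap w p a + F a - (-graphPLap w p b + F b) =
      F a - F b - (graphPLap w p a - graphPLap w p b) := by abel
  rw [hsplit, inner_sub_left]
  linarith [hF a b, inner_graphPLap_sub_nonneg hsym hw hp a b]

end GraphPLaplacian

lemma norm_le_exp_mul_of_inner_deriv_le {E : Type*} [NormedAddCommGroup E]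
    [InnerProductSpace ℝ E] {f f' : ℝ → E} {C : ℝ}
    (hf : ∀ t, 0 ≤ t → HasDerivAt f (f' t) t)
    (bound : ∀ t, 0 ≤ t → ⟪f' t, f t⟫ ≤ C * ‖f t‖ ^ 2) {t : ℝ} (ht : 0 ≤ t) :
    ‖f t‖ ≤ exp (C * t) * ‖f 0‖ := by
  have hsq : ∀ s, 0 ≤ s → HasDerivAt (‖f ·‖ ^ 2) (2 * ⟪f s, f' s⟫) s :=
    fun s hs => (hf s hs).norm_sq
  have hgronwall := le_gronwallBound_of_liminf_deriv_right_le (f := (‖f ·‖ ^ 2))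
    (K := 2 * C) (ε := 0) (δ := ‖f 0‖ ^ 2) (b := t)
    (fun s hs => (hsq s hs.1).continuousAt.continuousWithinAt)
    (fun s hs _ hr => (hsq s hs.1).hasDerivWithinAt.liminf_right_slope_le hr) le_rfl
    (fun s hs => by linarith [real_inner_comm (f s) (f' s), bound s hs.1]) t ⟨ht, le_rfl⟩
  rw [← pow_le_pow_iff_left₀ (norm_nonneg _) (by positivity) two_ne_zero]
  calc ‖f t‖ ^ 2 ≤ ‖f 0‖ ^ 2 * exp (2 * C * (t - 0)) := by rwa [gronwallBound_ε0] at hgronwall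
    _ = (exp (C * t) * ‖f 0‖) ^ 2 := by rw [mul_pow, ← exp_nat_mul]; ring_nf

theorem graphPLap_continuous_dependence_general {n : ℕ}
    (w : Fin n → Fin n → ℝ)
    (hsym : ∀ i j, w i j = w j i) (hw : ∀ i j, 0 ≤ w i j) (p : ℝ) (hp : 2 ≤ p)
    (F : EuclideanSpace ℝ (Fin n) → EuclideanSpace ℝ (Fin n)) (C_F : ℝ)
    (hF : ∀ a b : EuclideanSpace ℝ (Fin n), ⟪F a - F b, a - b⟫ ≤ C_F * ‖a - b‖ ^ 2)
    (u v : ℝ → EuclideanSpace ℝ (Fin n))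
    (hu : ∀ t : ℝ, 0 ≤ t → HasDerivAt u (-(graphPLap w p (u t)) + F (u t)) t)
    (hv : ∀ t : ℝ, 0 ≤ t → HasDerivAt v (-(graphPLap w p (v t)) + F (v t)) t) :
    ∀ t : ℝ, 0 ≤ t → ‖u t - v t‖ ≤ Real.exp (C_F * t) * ‖u 0 - v 0‖ :=
  fun _ ht => norm_le_exp_mul_of_inner_deriv_le (f := u - v)
    (fun s hs => (hu s hs).sub (hv s hs))
    (fun s _ => inner_neg_graphPLap_add_sub_le hsym hw (by linarith) hF (u s) (v s)) ht

/-- Continuous dependence on initial data under a one-sided Lipschitz reaction term. -/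
theorem graphPLap_continuous_dependence {n : ℕ} (hn : 0 < n)
    (w : Fin n → Fin n → ℝ)
    (hsym : ∀ i j, w i j = w j i) (hw : ∀ i j, 0 ≤ w i j) (p : ℝ) (hp : 2 ≤ p)
    (F : EuclideanSpace ℝ (Fin n) → EuclideanSpace ℝ (Fin n)) (C_F : ℝ)
    (hF : ∀ a b : EuclideanSpace ℝ (Fin n), ⟪F a - F b, a - b⟫ ≤ C_F * ‖a - b‖ ^ 2)
    (u v : ℝ → EuclideanSpace ℝ (Fin n))
    (hu : ∀ t : ℝ, 0 ≤ t → HasDerivAt u (-(graphPLap w p (u t)) + F (u t)) t)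
    (hv : ∀ t : ℝ, 0 ≤ t → HasDerivAt v (-(graphPLap w p (v t)) + F (v t)) t) :
    ∀ t : ℝ, 0 ≤ t → ‖u t - v t‖ ≤ Real.exp (C_F * t) * ‖u 0 - v 0‖ :=
  graphPLap_continuous_dependence_general w hsym hw p hp F C_F hF u v hu hv
end
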